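/- Let a₁, a₂, w₁, w₂ be complex numbers with |w₁| < 1, |w₂| < 1, and suppose Re((1 - w₁·conj(w₂))·a₁·conj(a₂)) ≥ 0. Then for every t ∈ (0,1) with a₁ ≠ 0 and a₂ ≠ 0, one has |t·w₁·a₁ + (1-t)·w₂·a₂| < |t·a₁ + (1-t)·a₂|. More precisely, |t·a₁ + (1-t)·a₂|² − |t·w₁·a₁ + (1-t)·w₂·a₂|² = t²(1−|w₁|²)|a₁|² + (1−t)²(1−|w₂|²)|a₂|² + 2t(1−t)·Re((1 − w₁·conj(w₂))·a₁·conj(a₂)) > 0. -/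

import Mathlib

open Complex
open scoped ComplexConjugate

/- Expanding both squares, the terms |w₁ s a₁|² and |w₂ t a₂|² lower the diagonal terms to
(1 - |wⱼ|²) times the original ones, and the two cross terms combine into
2 s t Re((1 - w₁ conj w₂) a₁ conj a₂). With s > 0, t ≥ 0, a₁ ≠ 0 and |w₁| < 1 the first diagonal
term is positive and the other two are nonnegative, so the dilated combination is strictly shorter. -/

theorem sq_norm_add_sub_sq_norm_dilated_add (s t : ℝ) (a₁ a₂ w₁ w₂ : ℂ) :
    ‖(s : ℂ) * a₁ + t * a₂‖ ^ 2 - ‖(s : ℂ) * w₁ * a₁ + t * w₂ * a₂‖ ^ 2 =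
      s ^ 2 * (1 - ‖w₁‖ ^ 2) * ‖a₁‖ ^ 2 + t ^ 2 * (1 - ‖w₂‖ ^ 2) * ‖a₂‖ ^ 2 +
        2 * s * t * ((1 - w₁ * conj w₂) * a₁ * conj a₂).re := by
  simp only [Complex.sq_norm, normSq_apply, add_re, add_im, mul_re, mul_im, sub_re, sub_im, one_re,
    one_im, ofReal_re, ofReal_im, conj_re, conj_im]
  ring

theorem dilation_defect_pos {s t : ℝ} {a₁ a₂ w₁ w₂ : ℂ} (hs : 0 < s) (ht : 0 ≤ t)
    (hw₁ : ‖w₁‖ < 1) (hw₂ : ‖w₂‖ ≤ 1) (ha₁ : a₁ ≠ 0)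
    (hre : 0 ≤ ((1 - w₁ * conj w₂) * a₁ * conj a₂).re) :
    0 < s ^ 2 * (1 - ‖w₁‖ ^ 2) * ‖a₁‖ ^ 2 + t ^ 2 * (1 - ‖w₂‖ ^ 2) * ‖a₂‖ ^ 2 +
      2 * s * t * ((1 - w₁ * conj w₂) * a₁ * conj a₂).re := by
  have hw₁' : 0 < 1 - ‖w₁‖ ^ 2 := by nlinarith [norm_nonneg w₁]
  have hw₂' : 0 ≤ 1 - ‖w₂‖ ^ 2 := by nlinarith [norm_nonneg w₂]
  have hfirst : 0 < s ^ 2 * (1 - ‖w₁‖ ^ 2) * ‖a₁‖ ^ 2 := by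
    have := norm_pos_iff.mpr ha₁
    positivity
  have hsecond : 0 ≤ t ^ 2 * (1 - ‖w₂‖ ^ 2) * ‖a₂‖ ^ 2 := by positivity
  have hcross : 0 ≤ 2 * s * t * ((1 - w₁ * conj w₂) * a₁ * conj a₂).re := by positivity
  linarith

theorem stmt_6_general (a₁ a₂ w₁ w₂ : ℂ)
    (hw₁ : ‖w₁‖ < 1) (hw₂ : ‖w₂‖ < 1)
    (hre : 0 ≤ ((1 - w₁ * (starRingEnd ℂ) w₂) * a₁ * (starRingEnd ℂ) a₂).re)
    (t : ℝ) (ht : t ∈ Set.Ioo (0 : ℝ) 1) (ha₁ : a₁ ≠ 0) :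
    ‖(t : ℂ) * w₁ * a₁ + (1 - (t : ℂ)) * w₂ * a₂‖ <
      ‖(t : ℂ) * a₁ + (1 - (t : ℂ)) * a₂‖ ∧
    (‖(t : ℂ) * a₁ + (1 - (t : ℂ)) * a₂‖) ^ 2 -
        (‖(t : ℂ) * w₁ * a₁ + (1 - (t : ℂ)) * w₂ * a₂‖) ^ 2 =
      t ^ 2 * (1 - (‖w₁‖) ^ 2) * (‖a₁‖) ^ 2 +
        (1 - t) ^ 2 * (1 - (‖w₂‖) ^ 2) * (‖a₂‖) ^ 2 +
        2 * t * (1 - t) * ((1 - w₁ * (starRingEnd ℂ) w₂) * a₁ * (starRingEnd ℂ) a₂).re ∧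
    0 < t ^ 2 * (1 - (‖w₁‖) ^ 2) * (‖a₁‖) ^ 2 +
        (1 - t) ^ 2 * (1 - (‖w₂‖) ^ 2) * (‖a₂‖) ^ 2 +
        2 * t * (1 - t) * ((1 - w₁ * (starRingEnd ℂ) w₂) * a₁ * (starRingEnd ℂ) a₂).re := by
  obtain ⟨ht₀, ht₁⟩ := ht
  have hidentity := sq_norm_add_sub_sq_norm_dilated_add t (1 - t) a₁ a₂ w₁ w₂
  push_cast at hidentity
  have hpos := dilation_defect_pos ht₀ (sub_nonneg.mpr ht₁.le) hw₁ hw₂.le ha₁ hre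
  refine ⟨?_, hidentity, hpos⟩
  exact lt_of_pow_lt_pow_left₀ 2 (norm_nonneg _) (by linarith)

theorem stmt_6 (a₁ a₂ w₁ w₂ : ℂ)
    (hw₁ : ‖w₁‖ < 1) (hw₂ : ‖w₂‖ < 1)
    (hre : 0 ≤ ((1 - w₁ * (starRingEnd ℂ) w₂) * a₁ * (starRingEnd ℂ) a₂).re)
    (t : ℝ) (ht : t ∈ Set.Ioo (0 : ℝ) 1) (ha₁ : a₁ ≠ 0) (ha₂ : a₂ ≠ 0) :
    ‖(t : ℂ) * w₁ * a₁ + (1 - (t : ℂ)) * w₂ * a₂‖ <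
      ‖(t : ℂ) * a₁ + (1 - (t : ℂ)) * a₂‖ ∧
    (‖(t : ℂ) * a₁ + (1 - (t : ℂ)) * a₂‖) ^ 2 -
        (‖(t : ℂ) * w₁ * a₁ + (1 - (t : ℂ)) * w₂ * a₂‖) ^ 2 =
      t ^ 2 * (1 - (‖w₁‖) ^ 2) * (‖a₁‖) ^ 2 +
        (1 - t) ^ 2 * (1 - (‖w₂‖) ^ 2) * (‖a₂‖) ^ 2 +
        2 * t * (1 - t) * ((1 - w₁ * (starRingEnd ℂ) w₂) * a₁ * (starRingEnd ℂ) a₂).re ∧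
    0 < t ^ 2 * (1 - (‖w₁‖) ^ 2) * (‖a₁‖) ^ 2 +
        (1 - t) ^ 2 * (1 - (‖w₂‖) ^ 2) * (‖a₂‖) ^ 2 +
        2 * t * (1 - t) * ((1 - w₁ * (starRingEnd ℂ) w₂) * a₁ * (starRingEnd ℂ) a₂).re :=
  stmt_6_general a₁ a₂ w₁ w₂ hw₁ hw₂ hre t ht ha₁
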